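/- Fix t ∈ ℝ and let q, r : ℝ → ℂ be continuous with z ↦ q(z) r(z) integrable on (−∞, x] for every x ∈ ℝ. Define E(x) = exp((i/2)∫_{−∞}^x q(z) r(z) dz) and, for c ∈ ℂ, E(x)^c := exp(c·(i/2)∫_{−∞}^x q(z) r(z) dz). Let a, b, κ ∈ ℂ with κ ≠ 0 and set q̃(x) = (1/κ) q(x) E(x)^{b−a} and r̃(x) = κ r(x) E(x)^{a−b}. Let ζ ∈ ℂ and let Ψ = (Ψ₁, Ψ₂) : ℝ → ℂ² be differentiable with Ψ₁' = −iζ² Ψ₁ + ζ q Ψ₂ and Ψ₂' = ζ r Ψ₁ + iζ² Ψ₂. Then the function Ψ̃ := (E^b Ψ₁, E^a Ψ₂) satisfies the perturbed linear system Ψ̃₁' = (−iζ² + (ib/2) q̃ r̃) Ψ̃₁ + κ ζ q̃ Ψ̃₂ and Ψ̃₂' = (1/κ) ζ r̃ Ψ̃₁ + (iζ² + (ia/2) q̃ r̃) Ψ̃₂ on all of ℝ. -/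

import Mathlib

open MeasureTheory

noncomputable def Epow (q r : ℝ → ℂ) (c : ℂ) (x : ℝ) : ℂ :=
  Complex.exp (c * (Complex.I / 2) * ∫ z in Set.Iic x, q z * r z)

noncomputable def qTilde (q r : ℝ → ℂ) (a b κ : ℂ) (x : ℝ) : ℂ :=
  (1 / κ) * q x * Epow q r (b - a) x

noncomputable def rTilde (q r : ℝ → ℂ) (a b κ : ℂ) (x : ℝ) : ℂ :=
  κ * r x * Epow q r (a - b) x

lemma Epow_mul_Epow (q r : ℝ → ℂ) (c d : ℂ) (x : ℝ) :
    Epow q r c x * Epow q r d x = Epow q r (c + d) x := by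
  simp only [Epow, ← Complex.exp_add]; ring_nf

lemma hasDerivAt_F (q r : ℝ → ℂ) (hq : Continuous q) (hr : Continuous r)
    (hint : ∀ x : ℝ, IntegrableOn (fun z => q z * r z) (Set.Iic x)) (x : ℝ) :
    HasDerivAt (fun y => ∫ z in Set.Iic y, q z * r z) (q x * r x) x := by
  have key : ∀ y : ℝ, (∫ z in Set.Iic y, q z * r z)
      = (∫ z in Set.Iic x, q z * r z) + ∫ t in x..y, q t * r t := by
    intro y
    have := intervalIntegral.integral_Iic_sub_Iic (μ := volume)
      (f := fun z => q z * r z) (hint x) (hint y)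
    linear_combination this
  have hcont : Continuous fun z => q z * r z := hq.mul hr
  have hderiv : HasDerivAt (fun y => (∫ z in Set.Iic x, q z * r z)
      + ∫ t in x..y, q t * r t) (q x * r x) x := by
    refine HasDerivAt.const_add _ ?_
    exact intervalIntegral.integral_hasDerivAt_right
      (hcont.intervalIntegrable _ _)
      (hcont.stronglyMeasurableAtFilter _ _) hcont.continuousAt
  exact hderiv.congr_deriv rfl |>.congr_of_eventuallyEq
    (Filter.Eventually.of_forall fun y => (key y))

lemma hasDerivAt_Epow (q r : ℝ → ℂ) (hq : Continuous q) (hr : Continuous r)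
    (hint : ∀ x : ℝ, IntegrableOn (fun z => q z * r z) (Set.Iic x)) (c : ℂ) (x : ℝ) :
    HasDerivAt (Epow q r c) (c * (Complex.I / 2) * (q x * r x) * Epow q r c x) x := by
  have h := ((hasDerivAt_F q r hq hr hint x).const_mul (c * (Complex.I / 2))).cexp
  unfold Epow
  convert h using 1
  ring

/-- If `Ψ` solves the unperturbed linear system, then `Ψ̃ = (E^b Ψ₁, E^a Ψ₂)` solves the
perturbed linear system with potentials `q̃, r̃` and parameters `a, b, κ`. -/
theorem stmt2 (q r : ℝ → ℂ) (hq : Continuous q) (hr : Continuous r)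
    (hint : ∀ x : ℝ, IntegrableOn (fun z => q z * r z) (Set.Iic x))
    (a b κ : ℂ) (hκ : κ ≠ 0) (ζ : ℂ) (Ψ₁ Ψ₂ : ℝ → ℂ)
    (h1 : ∀ x : ℝ, HasDerivAt Ψ₁ (-Complex.I * ζ ^ 2 * Ψ₁ x + ζ * q x * Ψ₂ x) x)
    (h2 : ∀ x : ℝ, HasDerivAt Ψ₂ (ζ * r x * Ψ₁ x + Complex.I * ζ ^ 2 * Ψ₂ x) x) :
    ∀ x : ℝ,
      HasDerivAt (fun y => Epow q r b y * Ψ₁ y)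
        ((-Complex.I * ζ ^ 2 + (Complex.I * b / 2) * qTilde q r a b κ x * rTilde q r a b κ x)
            * (Epow q r b x * Ψ₁ x)
          + κ * ζ * qTilde q r a b κ x * (Epow q r a x * Ψ₂ x)) x ∧
      HasDerivAt (fun y => Epow q r a y * Ψ₂ y)
        ((1 / κ) * ζ * rTilde q r a b κ x * (Epow q r b x * Ψ₁ x)
          + (Complex.I * ζ ^ 2 + (Complex.I * a / 2) * qTilde q r a b κ x * rTilde q r a b κ x)
            * (Epow q r a x * Ψ₂ x)) x := by
  intro x
  have h0 : Epow q r (b - a) x * Epow q r (a - b) x = 1 := by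
    rw [Epow_mul_Epow, show b - a + (a - b) = (0:ℂ) by ring]
    simp [Epow]
  have hqr : qTilde q r a b κ x * rTilde q r a b κ x = q x * r x := by
    simp only [qTilde, rTilde]
    field_simp
    linear_combination (q x * r x) * h0
  have hba : Epow q r (b - a) x * Epow q r a x = Epow q r b x := by
    rw [Epow_mul_Epow]; ring_nf
  have hab : Epow q r (a - b) x * Epow q r b x = Epow q r a x := by
    rw [Epow_mul_Epow]; ring_nf
  have hq1 : κ * qTilde q r a b κ x = q x * Epow q r (b - a) x := by
    simp only [qTilde]; field_simp
  have hr1 : (1 / κ) * rTilde q r a b κ x = r x * Epow q r (a - b) x := by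
    simp only [rTilde]; field_simp
  constructor
  · have h := (hasDerivAt_Epow q r hq hr hint b x).mul (h1 x)
    refine h.congr_deriv ?_
    symm
    linear_combination (Complex.I * b / 2 * Epow q r b x * Ψ₁ x : ℂ) * hqr
      + (ζ * Epow q r a x * Ψ₂ x) * hq1 + (ζ * q x * Ψ₂ x) * hba
  · have h := (hasDerivAt_Epow q r hq hr hint a x).mul (h2 x)
    refine h.congr_deriv ?_
    symm
    linear_combination (Complex.I * a / 2 * Epow q r a x * Ψ₂ x : ℂ) * hqr
      + (ζ * Epow q r b x * Ψ₁ x) * hr1 + (ζ * r x * Ψ₁ x) * hab
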